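/- arXiv:2308.16754 — 4 statements merged into one kernel-verified Lean document; each statement's English description precedes it below -/
import Mathlib

section
/- Let H be a RKHS over X with kernel K and f: X → ℂ. If there exists c > 0 such that c²K(x,y) − f(x) conj(f(y)) is a kernel function on X, then for any finite set x₁,…,x_n ∈ X there exists h ∈ H with ‖h‖ ≤ c and h(x_i) = f(x_i) for all i. -/
open ComplexOrder

/-- `K` is a kernel function: every finite Gram matrix is positive semidefinite. -/
def IsKernel {X : Type*} (K : X → X → ℂ) : Prop :=
  ∀ (N : ℕ) (x : Fin N → X), (Matrix.of fun i j => K (x i) (x j)).PosSemidef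

/-- Let `H` be a RKHS over `X` (evaluation map `T`, kernels `k y`, kernel function
`K x y = T (k y) x`) and `f : X → ℂ`.  If there is `c > 0` such that
`c² K(x,y) − f(x) conj (f y)` is a kernel function, then for every finite set of points
there is `h ∈ H` with `‖h‖ ≤ c` agreeing with `f` on those points. -/
theorem rkhs_finite_interpolation_of_kernel_dominated {X : Type*} {H : Type*}
    [NormedAddCommGroup H] [InnerProductSpace ℂ H] [CompleteSpace H]
    (T : H →ₗ[ℂ] (X → ℂ)) (hT : Function.Injective T)
    (k : X → H) (hk : ∀ (g : H) (y : X), T g y = (inner ℂ (k y) g : ℂ))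
    (f : X → ℂ) (c : ℝ) (hc : 0 < c)
    (hker : IsKernel fun x y => (c : ℂ) ^ 2 * T (k y) x - f x * star (f y)) :
    ∀ (n : ℕ) (x : Fin n → X), ∃ h : H, ‖h‖ ≤ c ∧ ∀ i, T h (x i) = f (x i) := by
  intro n x
  -- Key inequality derived from positive semidefiniteness.
  have key : ∀ u : Fin n → ℂ,
      ‖∑ i, (starRingEnd ℂ) (u i) * f (x i)‖ ^ 2 ≤ c ^ 2 * ‖∑ i, u i • k (x i)‖ ^ 2 := by
    intro u
    have h0 := (hker n x).dotProduct_mulVec_nonneg u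
    set S : H := ∑ i, u i • k (x i) with hS
    set F : ℂ := ∑ i, (starRingEnd ℂ) (u i) * f (x i) with hF
    have hA : (c : ℂ) ^ 2 * (inner ℂ S S : ℂ)
        = ∑ i, ∑ j, (c : ℂ) ^ 2 * ((starRingEnd ℂ) (u i) * u j
            * (inner ℂ (k (x i)) (k (x j)) : ℂ)) := by
      rw [hS, sum_inner]
      rw [Finset.mul_sum]
      refine Finset.sum_congr rfl fun i _ => ?_
      rw [inner_sum, Finset.mul_sum]
      refine Finset.sum_congr rfl fun j _ => ?_
      rw [inner_smul_left, inner_smul_right]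
      ring
    have hB : F * (starRingEnd ℂ) F
        = ∑ i, ∑ j, ((starRingEnd ℂ) (u i) * f (x i))
            * (u j * (starRingEnd ℂ) (f (x j))) := by
      rw [hF, map_sum, Finset.sum_mul_sum]
      refine Finset.sum_congr rfl fun i _ => ?_
      refine Finset.sum_congr rfl fun j _ => ?_
      rw [map_mul, starRingEnd_self_apply]
    have hcalc : dotProduct (star u)
        (Matrix.mulVec (Matrix.of fun i j =>
          (c : ℂ) ^ 2 * T (k (x j)) (x i) - f (x i) * star (f (x j))) u)
        = (c : ℂ) ^ 2 * (inner ℂ S S : ℂ) - F * (starRingEnd ℂ) F := by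
      rw [hA, hB, ← Finset.sum_sub_distrib]
      simp only [← Finset.sum_sub_distrib]
      simp only [dotProduct, Matrix.mulVec, Matrix.of_apply, Pi.star_apply, hk,
        Finset.mul_sum]
      refine Finset.sum_congr rfl fun i _ => Finset.sum_congr rfl fun j _ => ?_
      simp only [RCLike.star_def]
      ring
    rw [hcalc] at h0
    have h1 : F * (starRingEnd ℂ) F ≤ (c : ℂ) ^ 2 * (inner ℂ S S : ℂ) := sub_nonneg.mp h0
    rw [Complex.mul_conj, inner_self_eq_norm_sq_to_K] at h1
    have h3 : Complex.normSq F ≤ c ^ 2 * ‖S‖ ^ 2 := by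
      have h2 := (Complex.le_def.mp h1).1
      simpa [pow_two, Complex.mul_re, Complex.mul_im] using h2
    calc ‖F‖ ^ 2 = Complex.normSq F := by
          rw [Complex.sq_norm]
      _ ≤ c ^ 2 * ‖S‖ ^ 2 := h3
  -- the evaluation map into ℂⁿ
  let R : H →ₗ[ℂ] EuclideanSpace ℂ (Fin n) :=
    { toFun := fun g => WithLp.toLp 2 (fun i => (inner ℂ (k (x i)) g : ℂ))
      map_add' := fun a b => by ext i; simp [inner_add_right]
      map_smul' := fun m a => by ext i; simp [inner_smul_right] }
  let v : EuclideanSpace ℂ (Fin n) := WithLp.toLp 2 (fun i => f (x i))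
  have hv : v ∈ (LinearMap.range R)ᗮᗮ := by
    rw [Submodule.mem_orthogonal]
    intro u hu
    rw [Submodule.mem_orthogonal] at hu
    -- for any g, ⟪R g, u⟫ = ⟪g, ∑ i, u i • k (x i)⟫
    have hbracket : ∀ g : H, (inner ℂ (R g) u : ℂ) = (inner ℂ g (∑ i, u i • k (x i)) : ℂ) := by
      intro g
      rw [inner_sum]
      simp only [PiLp.inner_apply, RCLike.inner_apply, inner_smul_right]
      refine Finset.sum_congr rfl fun i _ => ?_
      rw [← inner_conj_symm g (k (x i))]
      simp [R, mul_comm]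
    have hS0 : (∑ i, u i • k (x i)) = 0 := by
      have := hu (R (∑ i, u i • k (x i))) (LinearMap.mem_range_self _ _)
      rw [hbracket] at this
      exact inner_self_eq_zero.mp this
    have hF0 : (∑ i, (starRingEnd ℂ) (u i) * f (x i)) = 0 := by
      have hkey := key u
      rw [hS0] at hkey
      simp only [norm_zero] at hkey
      have : ‖∑ i, (starRingEnd ℂ) (u i) * f (x i)‖ ^ 2 ≤ 0 := by simpa using hkey
      have h4 : ‖∑ i, (starRingEnd ℂ) (u i) * f (x i)‖ = 0 := by nlinarith [norm_nonneg (∑ i, (starRingEnd ℂ) (u i) * f (x i))]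
      exact norm_eq_zero.mp h4
    simpa [PiLp.inner_apply, RCLike.inner_apply, v, mul_comm] using hF0
  rw [Submodule.orthogonal_orthogonal] at hv
  obtain ⟨g, hg⟩ := hv
  -- project g onto the span of the kernels
  let V : Submodule ℂ H := Submodule.span ℂ (Set.range fun i => k (x i))
  haveI : FiniteDimensional ℂ V := FiniteDimensional.span_of_finite ℂ (Set.finite_range _)
  haveI : CompleteSpace V := FiniteDimensional.complete ℂ V
  let h : H := (V.orthogonalProjectionOnto g : H)
  have hmem : ∀ i, k (x i) ∈ V := fun i => Submodule.subset_span ⟨i, rfl⟩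
  have hproj : ∀ i, (inner ℂ (k (x i)) h : ℂ) = (inner ℂ (k (x i)) g : ℂ) := by
    intro i
    have horth : g - h ∈ Vᗮ := Submodule.sub_starProjection_mem_orthogonal (K := V) g
    have := (Submodule.mem_orthogonal V _).mp horth (k (x i)) (hmem i)
    rw [inner_sub_right] at this
    linear_combination -this
  have hval : ∀ i, (inner ℂ (k (x i)) h : ℂ) = f (x i) := by
    intro i
    rw [hproj i]
    have : R g i = v i := by rw [hg]
    simpa [R, v] using this
  refine ⟨h, ?_, fun i => by rw [hk]; exact hval i⟩
  -- norm bound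
  have hhV : h ∈ V := (V.orthogonalProjectionOnto g).2
  rw [show V = Submodule.span ℂ (Set.range fun i => k (x i)) from rfl,
    Submodule.mem_span_range_iff_exists_fun] at hhV
  obtain ⟨t, ht⟩ := hhV
  have hinner : (inner ℂ h h : ℂ) = ∑ i, (starRingEnd ℂ) (t i) * f (x i) := by
    conv_lhs => rw [← ht, sum_inner]
    refine Finset.sum_congr rfl fun i _ => ?_
    rw [inner_smul_left, ht, hval i]
  have hkey := key t
  rw [ht, ← hinner, inner_self_eq_norm_sq_to_K] at hkey
  simp only [norm_pow, Complex.norm_real, RCLike.norm_ofReal, Real.norm_eq_abs, abs_norm] at hkey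
  by_contra hcon
  push_neg at hcon
  have h1 : c ^ 2 < ‖h‖ ^ 2 := by nlinarith
  have hpos : 0 < ‖h‖ ^ 2 := lt_trans (pow_pos hc 2) h1
  nlinarith [mul_lt_mul_of_pos_right h1 hpos]
end

section
/- Let H be a RKHS over X with reproducing kernel K. If f ∈ H, then c²K(x,y) − f(x) conj(f(y)) is a kernel function on X, where c = ‖f‖_H. -/
open ComplexOrder

/-- Let `H` be a RKHS over `X` (evaluation map `T`, kernels `k y`, kernel function
`K x y = T (k y) x`).  If `f ∈ H`, then `c² K(x,y) − f(x) conj (f y)` is a kernel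
function, where `c = ‖f‖`. -/
theorem kernel_dominates_of_mem_rkhs {X : Type*} {H : Type*}
    [NormedAddCommGroup H] [InnerProductSpace ℂ H] [CompleteSpace H]
    (T : H →ₗ[ℂ] (X → ℂ)) (hT : Function.Injective T)
    (k : X → H) (hk : ∀ (g : H) (y : X), T g y = (inner ℂ (k y) g : ℂ))
    (f : H) :
    IsKernel fun x y => ((‖f‖ : ℂ)) ^ 2 * T (k y) x - T f x * star (T f y) := by
  intro N x
  constructor
  · ext i j
    simp only [Matrix.conjTranspose_apply, Matrix.of_apply, hk, star_sub, star_mul, star_star,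
      star_pow, inner_conj_symm]
    rw [show star ((‖f‖ : ℂ)) = (‖f‖ : ℂ) from Complex.conj_ofReal _]
    rw [show star (inner ℂ (k (x j)) (k (x i)) : ℂ) = inner ℂ (k (x i)) (k (x j)) from
      inner_conj_symm _ _]
    ring
  · intro v
    simp only [Matrix.of_apply, hk]
    set u : H := ∑ i, v i • k (x i) with hu
    have hA : (inner ℂ u u : ℂ) = ∑ i, ∑ j, star (v i) * v j * inner ℂ (k (x i)) (k (x j)) := by
      simp only [hu, sum_inner, inner_sum, inner_smul_left, inner_smul_right, RCLike.star_def,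
        Finset.mul_sum]
      rw [Finset.sum_comm]
      exact Finset.sum_congr rfl fun i _ => Finset.sum_congr rfl fun j _ => by ring
    have hB : (inner ℂ u f : ℂ) = ∑ i, star (v i) * inner ℂ (k (x i)) f := by
      simp [hu, sum_inner, inner_smul_left, RCLike.star_def, mul_comm]
    have hC : (inner ℂ f u : ℂ) = ∑ j, v j * star (inner ℂ (k (x j)) f) := by
      simp only [hu, inner_sum, inner_smul_right]
      exact Finset.sum_congr rfl fun j _ => by rw [← inner_conj_symm f (k (x j))]; rfl
    have key : dotProduct (star v) ((Matrix.of fun i j =>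
        ((‖f‖ : ℂ)) ^ 2 * (inner ℂ (k (x i)) (k (x j)) : ℂ)
          - (inner ℂ (k (x i)) f : ℂ) * star (inner ℂ (k (x j)) f : ℂ)) |>.mulVec v)
        = ((‖f‖ : ℂ)) ^ 2 * (inner ℂ u u : ℂ) - (inner ℂ u f : ℂ) * (inner ℂ f u : ℂ) := by
      rw [hA, hB, hC, Finset.sum_mul_sum]
      simp only [dotProduct, Matrix.mulVec, Matrix.of_apply, Pi.star_apply,
        Finset.mul_sum]
      rw [← Finset.sum_sub_distrib]
      refine Finset.sum_congr rfl fun i _ => ?_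
      rw [← Finset.sum_sub_distrib]
      exact Finset.sum_congr rfl fun j _ => by ring
    simp only [Finsupp.sum_fintype, star_zero, zero_mul, mul_zero, Finset.sum_const_zero,
      implies_true]
    simp only [dotProduct, Matrix.mulVec, Matrix.of_apply, Pi.star_apply, Finset.mul_sum,
      ← mul_assoc] at key
    rw [key]
    have h1 : (inner ℂ u u : ℂ) = ((‖u‖ ^ 2 : ℝ) : ℂ) := by
      rw [inner_self_eq_norm_sq_to_K]; norm_cast
    have h2 : (inner ℂ u f : ℂ) * (inner ℂ f u : ℂ) = ((‖(inner ℂ u f : ℂ)‖ ^ 2 : ℝ) : ℂ) := by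
      rw [← inner_conj_symm f u, Complex.mul_conj]
      push_cast [Complex.normSq_eq_norm_sq]
      norm_cast
    rw [h1, h2]
    have heq : ((‖f‖ : ℂ)) ^ 2 * ((‖u‖ ^ 2 : ℝ) : ℂ) - ((‖(inner ℂ u f : ℂ)‖ ^ 2 : ℝ) : ℂ)
        = (((‖f‖ * ‖u‖) ^ 2 - ‖(inner ℂ u f : ℂ)‖ ^ 2 : ℝ) : ℂ) := by push_cast; ring
    rw [heq, Complex.zero_le_real]
    have hcs := norm_inner_le_norm (𝕜 := ℂ) u f
    nlinarith [norm_nonneg (inner ℂ u f : ℂ), norm_nonneg f, norm_nonneg u]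
end

section
/- Let H₁, H₂ be RKHSs on X with kernels K₁, K₂. Then H₁ is contractively contained in H₂ (i.e., H₁ ⊆ H₂ as sets and ‖f‖₂ ≤ ‖f‖₁ for all f ∈ H₁) if and only if K₂ − K₁ is a kernel function on X. -/
open ComplexOrder Matrix

lemma gram_dot {H : Type*} [NormedAddCommGroup H] [InnerProductSpace ℂ H] {N : ℕ}
    (k : Fin N → H) (v : Fin N → ℂ) :
    ∑ i, starRingEnd ℂ (v i) * ∑ j, (inner ℂ (k i) (k j) : ℂ) * v j
      = (‖∑ i, v i • k i‖ : ℂ) ^ 2 := by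
  have : ∑ i, starRingEnd ℂ (v i) * ∑ j, (inner ℂ (k i) (k j) : ℂ) * v j
      = (inner ℂ (∑ i, v i • k i) (∑ i, v i • k i) : ℂ) := by
    rw [sum_inner]
    refine Finset.sum_congr rfl fun i _ => ?_
    rw [inner_smul_left, inner_sum]
    congr 1
    refine Finset.sum_congr rfl fun j _ => ?_
    rw [inner_smul_right, mul_comm]
  rw [this]
  exact_mod_cast inner_self_eq_norm_sq_to_K (𝕜 := ℂ) _

lemma diff_dot {H₁ H₂ : Type*} [NormedAddCommGroup H₁] [InnerProductSpace ℂ H₁]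
    [NormedAddCommGroup H₂] [InnerProductSpace ℂ H₂] {N : ℕ}
    (a : Fin N → H₁) (b : Fin N → H₂) (v : Fin N → ℂ) :
    star v ⬝ᵥ (Matrix.of fun i j => (inner ℂ (b i) (b j) : ℂ) - (inner ℂ (a i) (a j) : ℂ)).mulVec v
      = (‖∑ i, v i • b i‖ : ℂ) ^ 2 - (‖∑ i, v i • a i‖ : ℂ) ^ 2 := by
  rw [← gram_dot a v, ← gram_dot b v, ← Finset.sum_sub_distrib]
  simp only [dotProduct, Matrix.mulVec, Matrix.of_apply, Pi.star_apply, RCLike.star_def]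
  refine Finset.sum_congr rfl fun i _ => ?_
  rw [← mul_sub, ← Finset.sum_sub_distrib]
  congr 1
  refine Finset.sum_congr rfl fun j _ => ?_
  ring

lemma linearCombination_eq_sum {X H : Type*} [AddCommGroup H] [Module ℂ H]
    (k : X → H) (c : X →₀ ℂ) :
    Finsupp.linearCombination ℂ k c
      = ∑ i : Fin c.support.card,
          c ↑(c.support.equivFin.symm i) • k ↑(c.support.equivFin.symm i) := by
  rw [Finsupp.linearCombination_apply, Finsupp.sum, ← Finset.sum_coe_sort]
  exact (Equiv.sum_comp c.support.equivFin.symm fun a => c ↑a • k ↑a).symm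

/-- Let `H₁, H₂` be RKHSs on `X` with kernels `K₁, K₂` (realized by injective linear
evaluation maps `Tⱼ` and kernels `kⱼ y`, with `Kⱼ x y = Tⱼ (kⱼ y) x`).  Then `H₁` is
contractively contained in `H₂` (i.e. `H₁ ⊆ H₂` as spaces of functions, and
`‖f‖₂ ≤ ‖f‖₁` for every `f ∈ H₁`) if and only if `K₂ − K₁` is a kernel function on `X`. -/
theorem contractive_containment_iff_kernel_difference {X : Type*}
    {H₁ H₂ : Type*}
    [NormedAddCommGroup H₁] [InnerProductSpace ℂ H₁] [CompleteSpace H₁]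
    [NormedAddCommGroup H₂] [InnerProductSpace ℂ H₂] [CompleteSpace H₂]
    (T₁ : H₁ →ₗ[ℂ] (X → ℂ)) (hT₁ : Function.Injective T₁)
    (k₁ : X → H₁) (hk₁ : ∀ (g : H₁) (y : X), T₁ g y = (inner ℂ (k₁ y) g : ℂ))
    (T₂ : H₂ →ₗ[ℂ] (X → ℂ)) (hT₂ : Function.Injective T₂)
    (k₂ : X → H₂) (hk₂ : ∀ (g : H₂) (y : X), T₂ g y = (inner ℂ (k₂ y) g : ℂ)) :
    (Set.range T₁ ⊆ Set.range T₂ ∧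
      ∀ (f₁ : H₁) (f₂ : H₂), T₁ f₁ = T₂ f₂ → ‖f₂‖ ≤ ‖f₁‖) ↔
    IsKernel (fun x y => T₂ (k₂ y) x - T₁ (k₁ y) x) := by
  have hMeq : ∀ (N : ℕ) (x : Fin N → X),
      (Matrix.of fun i j => T₂ (k₂ (x j)) (x i) - T₁ (k₁ (x j)) (x i))
        = Matrix.of fun i j =>
            (inner ℂ (k₂ (x i)) (k₂ (x j)) : ℂ) - (inner ℂ (k₁ (x i)) (k₁ (x j)) : ℂ) := by
    intro N x
    ext i j
    simp only [Matrix.of_apply, hk₁, hk₂]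
  constructor
  · rintro ⟨hsub, hcon⟩ N x
    rw [hMeq N x]
    refine Matrix.PosSemidef.of_dotProduct_mulVec_nonneg ?_ ?_
    · ext i j
      simp only [Matrix.conjTranspose_apply, Matrix.of_apply, star_sub, RCLike.star_def,
        inner_conj_symm]
    · intro v
      rw [diff_dot]
      set s₁ := ∑ i, v i • k₁ (x i) with hs₁
      set s₂ := ∑ i, v i • k₂ (x i) with hs₂
      obtain ⟨f₂, hf₂⟩ : T₁ s₁ ∈ Set.range T₂ := hsub ⟨s₁, rfl⟩
      have hn : ‖f₂‖ ≤ ‖s₁‖ := hcon s₁ f₂ hf₂.symm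
      have key : (inner ℂ s₁ s₁ : ℂ) = inner ℂ s₂ f₂ := by
        rw [hs₁, hs₂, sum_inner, sum_inner]
        refine Finset.sum_congr rfl fun i _ => ?_
        rw [inner_smul_left, inner_smul_left, ← hk₁, ← hk₂, hf₂]
      have hsq : ‖s₁‖ ^ 2 ≤ ‖s₂‖ * ‖f₂‖ := by
        have h1 : ‖(inner ℂ s₁ s₁ : ℂ)‖ = ‖s₁‖ ^ 2 := by
          rw [inner_self_eq_norm_sq_to_K (𝕜 := ℂ)]
          simp [sq_abs]
        calc ‖s₁‖ ^ 2 = ‖(inner ℂ s₂ f₂ : ℂ)‖ := by rw [← h1, key]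
          _ ≤ ‖s₂‖ * ‖f₂‖ := norm_inner_le_norm _ _
      have hle : ‖s₁‖ ≤ ‖s₂‖ := by
        nlinarith [norm_nonneg s₁, norm_nonneg s₂, norm_nonneg f₂]
      rw [sub_nonneg]
      have : ‖s₁‖ ^ 2 ≤ ‖s₂‖ ^ 2 := pow_le_pow_left₀ (norm_nonneg _) hle 2
      exact_mod_cast this
  · intro hker
    set Q₁ : (X →₀ ℂ) →ₗ[ℂ] H₁ := Finsupp.linearCombination ℂ k₁ with hQ₁def
    set Q₂ : (X →₀ ℂ) →ₗ[ℂ] H₂ := Finsupp.linearCombination ℂ k₂ with hQ₂def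
    have hQ : ∀ c : X →₀ ℂ, ‖Q₁ c‖ ≤ ‖Q₂ c‖ := by
      intro c
      set x : Fin c.support.card → X := fun i => ↑(c.support.equivFin.symm i) with hx
      set v : Fin c.support.card → ℂ := fun i => c (x i) with hv
      have h := (hker c.support.card x).dotProduct_mulVec_nonneg v
      rw [hMeq c.support.card x, diff_dot] at h
      have e1 : Q₁ c = ∑ i, v i • k₁ (x i) := linearCombination_eq_sum k₁ c
      have e2 : Q₂ c = ∑ i, v i • k₂ (x i) := linearCombination_eq_sum k₂ c
      rw [← e1, ← e2, sub_nonneg] at h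
      have h' : ‖Q₁ c‖ ^ 2 ≤ ‖Q₂ c‖ ^ 2 := by exact_mod_cast h
      nlinarith [norm_nonneg (Q₁ c), norm_nonneg (Q₂ c)]
    have key : ∀ f₁ : H₁, ∃ f₂ : H₂, T₂ f₂ = T₁ f₁ ∧ ‖f₂‖ ≤ ‖f₁‖ := by
      intro f₁
      set φ : (X →₀ ℂ) →ₗ[ℂ] ℂ := (innerSL ℂ f₁).toLinearMap ∘ₗ Q₁ with hφdef
      have hφ : ∀ c, φ c = (inner ℂ f₁ (Q₁ c) : ℂ) := fun c => rfl
      have hφbound : ∀ c, ‖φ c‖ ≤ ‖f₁‖ * ‖Q₂ c‖ := by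
        intro c
        rw [hφ]
        exact le_trans (norm_inner_le_norm _ _)
          (mul_le_mul_of_nonneg_left (hQ c) (norm_nonneg f₁))
      have hkerle : LinearMap.ker Q₂ ≤ LinearMap.ker φ := by
        intro c hc
        rw [LinearMap.mem_ker] at hc ⊢
        have := hφbound c
        rw [hc, norm_zero, mul_zero] at this
        exact norm_le_zero_iff.mp this
      set L : LinearMap.range Q₂ →ₗ[ℂ] ℂ :=
        ((LinearMap.ker Q₂).liftQ φ hkerle) ∘ₗ (Q₂.quotKerEquivRange.symm : _ →ₗ[ℂ] _)
        with hLdef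
      have hL : ∀ (c : X →₀ ℂ) (h : Q₂ c ∈ LinearMap.range Q₂), L ⟨Q₂ c, h⟩ = φ c := by
        intro c h
        have h1 : Q₂.quotKerEquivRange (Submodule.Quotient.mk c) = ⟨Q₂ c, h⟩ :=
          Subtype.ext (Q₂.quotKerEquivRange_apply_mk c)
        have h2 : Q₂.quotKerEquivRange.symm ⟨Q₂ c, h⟩ = Submodule.Quotient.mk c := by
          rw [← h1, LinearEquiv.symm_apply_apply]
        simp [hLdef, h2, Submodule.liftQ_apply]
      have hLbound : ∀ z : LinearMap.range Q₂, ‖L z‖ ≤ ‖f₁‖ * ‖z‖ := by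
        rintro ⟨_, c, rfl⟩
        rw [hL c ⟨c, rfl⟩]
        exact hφbound c
      set Lc := LinearMap.mkContinuous L ‖f₁‖ hLbound with hLcdef
      obtain ⟨g, hg, hgnorm⟩ := exists_extension_norm_eq (LinearMap.range Q₂) Lc
      refine ⟨(InnerProductSpace.toDual ℂ H₂).symm g, ?_, ?_⟩
      · funext y
        have hmem : k₂ y ∈ LinearMap.range Q₂ :=
          ⟨Finsupp.single y 1, by simp [hQ₂def, Finsupp.linearCombination_single]⟩
        have hQs : Q₂ (Finsupp.single y 1) = k₂ y := by
          simp [hQ₂def, Finsupp.linearCombination_single]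
        have hg1 : g (k₂ y) = (inner ℂ f₁ (k₁ y) : ℂ) := by
          have := hg ⟨k₂ y, hmem⟩
          rw [this]
          have : (⟨k₂ y, hmem⟩ : LinearMap.range Q₂) = ⟨Q₂ (Finsupp.single y 1), hQs ▸ hmem⟩ := by
            exact Subtype.ext hQs.symm
          rw [this]
          show L _ = _
          rw [hL]
          rw [hφ]
          congr 1
          simp [hQ₁def, Finsupp.linearCombination_single]
        rw [hk₂, hk₁, ← inner_conj_symm, InnerProductSpace.toDual_symm_apply, hg1,
          inner_conj_symm]
      · rw [LinearIsometryEquiv.norm_map, hgnorm]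
        exact LinearMap.mkContinuous_norm_le L (norm_nonneg f₁) hLbound
    constructor
    · rintro _ ⟨f₁, rfl⟩
      obtain ⟨f₂, h, _⟩ := key f₁
      exact ⟨f₂, h⟩
    · intro f₁ f₂' hEq
      obtain ⟨f₂, h, hn⟩ := key f₁
      have : f₂' = f₂ := hT₂ (hEq.symm.trans h.symm)
      rw [this]
      exact hn
end

section
/- Let K(x,y) = ∑_{j=0}^∞ a_j (y* x)^j be a power-series kernel on the unit ball with |a_j| < 1 for all j and a_l = 0 for some index l. Then the function f(x) = x^l belongs to the RKHS induced by the kernel κ(x,y) = ∑_j |a_j|(y*x)^j + (y*x)^l but does not belong to the RKHS induced by ∑_j |a_j|(y*x)^j; moreover the RKHS induced by κ is contractively contained in the RKHS induced by the ω-kernel 1/(1 − y*x). -/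
open ComplexOrder

/-- `K` is a kernel function on the subset `S`. -/
def IsKernelOn (S : Set ℂ) (K : ℂ → ℂ → ℂ) : Prop :=
  ∀ (N : ℕ) (x : Fin N → ℂ), (∀ i, x i ∈ S) →
    (Matrix.of fun i j => K (x i) (x j)).PosSemidef

/-- `f` belongs to the RKHS on `S` induced by the kernel `K`, characterized by:
there is `c > 0` such that `c² K(x,y) − f(x) conj (f y)` is a kernel function on `S`. -/
def MemRKHS (S : Set ℂ) (K : ℂ → ℂ → ℂ) (f : ℂ → ℂ) : Prop :=
  ∃ c : ℝ, 0 < c ∧ IsKernelOn S (fun x y => (c : ℂ) ^ 2 * K x y - f x * star (f y))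

/- auxiliary lemmas -/

lemma star_A (N : ℕ) (x v : Fin N → ℂ) (m : ℕ) :
    star (∑ i, star (v i) * x i ^ m) = ∑ i, v i * (star (x i)) ^ m := by
  rw [star_sum]
  exact Finset.sum_congr rfl fun i _ => by simp [star_mul', mul_comm]

lemma expand_quad (N : ℕ) (x v : Fin N → ℂ) (g : ℕ → ℂ)
    (hg : ∀ i j : Fin N, Summable (fun m => g m * (star (x j) * x i) ^ m)) :
    ∑ i, ∑ j, star (v i) * ((∑' m, g m * (star (x j) * x i) ^ m) * v j)
      = ∑' m, g m * ((∑ i, star (v i) * x i ^ m) * star (∑ i, star (v i) * x i ^ m)) := by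
  have h1 : ∀ i j : Fin N, star (v i) * ((∑' m, g m * (star (x j) * x i) ^ m) * v j)
      = ∑' m, star (v i) * (g m * (star (x j) * x i) ^ m * v j) := by
    intro i j
    rw [← tsum_mul_right, ← tsum_mul_left]
  have h2 : ∀ i j : Fin N, Summable (fun m => star (v i) * (g m * (star (x j) * x i) ^ m * v j)) :=
    fun i j => (((hg i j).mul_right _).mul_left _)
  calc ∑ i, ∑ j, star (v i) * ((∑' m, g m * (star (x j) * x i) ^ m) * v j)
      = ∑ i, ∑ j, ∑' m, star (v i) * (g m * (star (x j) * x i) ^ m * v j) := by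
        exact Finset.sum_congr rfl fun i _ => Finset.sum_congr rfl fun j _ => h1 i j
    _ = ∑ i, ∑' m, ∑ j, star (v i) * (g m * (star (x j) * x i) ^ m * v j) := by
        exact Finset.sum_congr rfl fun i _ => (Summable.tsum_finsetSum fun j _ => h2 i j).symm
    _ = ∑' m, ∑ i, ∑ j, star (v i) * (g m * (star (x j) * x i) ^ m * v j) := by
        exact (Summable.tsum_finsetSum fun i _ => summable_sum fun j _ => h2 i j).symm
    _ = ∑' m, g m * ((∑ i, star (v i) * x i ^ m) * star (∑ i, star (v i) * x i ^ m)) := by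
        refine tsum_congr fun m => ?_
        rw [star_A, Finset.sum_mul_sum, Finset.mul_sum]
        refine Finset.sum_congr rfl fun i _ => ?_
        rw [Finset.mul_sum]
        refine Finset.sum_congr rfl fun j _ => ?_
        rw [mul_pow]
        ring

lemma expand_rank1 (N : ℕ) (l : ℕ) (x v : Fin N → ℂ) :
    ∑ i, ∑ j, star (v i) * ((x i ^ l * star (x j ^ l)) * v j)
      = (∑ i, star (v i) * x i ^ l) * star (∑ i, star (v i) * x i ^ l) := by
  rw [star_A, Finset.sum_mul_sum]
  refine Finset.sum_congr rfl fun i _ => Finset.sum_congr rfl fun j _ => ?_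
  rw [star_pow]
  ring

lemma quad_expand (N : ℕ) (M : Matrix (Fin N) (Fin N) ℂ) (v : Fin N → ℂ) :
    dotProduct (star v) (Matrix.mulVec M v) = ∑ i, ∑ j, star (v i) * (M i j * v j) := by
  simp [dotProduct, Matrix.mulVec, Finset.mul_sum]

lemma summable_pow_mul (b : ℕ → ℝ) (hb1 : ∀ j, b j ≤ 1) (hb0 : ∀ j, 0 ≤ b j)
    {z : ℂ} (hz : ‖z‖ < 1) : Summable (fun m => ((b m : ℝ) : ℂ) * z ^ m) := by
  refine Summable.of_norm_bounded
    (summable_geometric_of_lt_one (norm_nonneg z) hz) fun m => ?_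
  rw [norm_mul, norm_pow, Complex.norm_real, Real.norm_eq_abs, abs_of_nonneg (hb0 m)]
  exact mul_le_of_le_one_left (by positivity) (hb1 m)

lemma norm_star_mul_lt_one {x y : ℂ} (hx : ‖x‖ < 1) (hy : ‖y‖ < 1) : ‖star y * x‖ < 1 := by
  rw [norm_mul, norm_star]
  nlinarith [norm_nonneg x, norm_nonneg y]

lemma isKernelOn_tsum (b : ℕ → ℝ) (hb0 : ∀ j, 0 ≤ b j) (hb1 : ∀ j, b j ≤ 1) :
    ∀ (N : ℕ) (x : Fin N → ℂ), (∀ i, x i ∈ Metric.ball (0 : ℂ) 1) →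
      (Matrix.of fun i j => ∑' m, ((b m : ℝ) : ℂ) * (star (x j) * x i) ^ m).PosSemidef := by
  intro N x hx
  have hx' : ∀ i, ‖x i‖ < 1 := fun i => mem_ball_zero_iff.mp (hx i)
  have hz : ∀ i j : Fin N, ‖star (x j) * x i‖ < 1 :=
    fun i j => norm_star_mul_lt_one (hx' i) (hx' j)
  have hsum : ∀ i j : Fin N, Summable (fun m => ((b m : ℝ) : ℂ) * (star (x j) * x i) ^ m) :=
    fun i j => summable_pow_mul b hb1 hb0 (hz i j)
  rw [Matrix.posSemidef_iff_dotProduct_mulVec]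
  constructor
  · show _ = _
    ext i j
    simp only [Matrix.conjTranspose_apply, Matrix.of_apply]
    rw [tsum_star]
    refine tsum_congr fun m => ?_
    simp only [star_mul', star_pow, star_star, Complex.star_def, Complex.conj_ofReal,
      RingHomCompTriple.comp_apply, RingHom.id_apply]
    rw [mul_comm (x i)]
  · intro v
    rw [quad_expand]
    have : ∀ i j : Fin N, (Matrix.of fun i j => ∑' m, ((b m : ℝ) : ℂ) * (star (x j) * x i) ^ m) i j
        = ∑' m, ((b m : ℝ) : ℂ) * (star (x j) * x i) ^ m := fun i j => rfl
    calc (0:ℂ) ≤ ∑' m, ((b m : ℝ) : ℂ) *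
          ((∑ i, star (v i) * x i ^ m) * star (∑ i, star (v i) * x i ^ m)) := by
          refine tsum_nonneg fun m => ?_
          have h1 : (∑ i, star (v i) * x i ^ m) * star (∑ i, star (v i) * x i ^ m)
              = ((Complex.normSq (∑ i, star (v i) * x i ^ m) : ℝ) : ℂ) := Complex.mul_conj _
          rw [h1, ← Complex.ofReal_mul]
          exact Complex.zero_le_real.mpr (mul_nonneg (hb0 m) (Complex.normSq_nonneg _))
      _ = ∑ i, ∑ j, star (v i) *
          ((Matrix.of fun i j => ∑' m, ((b m : ℝ) : ℂ) * (star (x j) * x i) ^ m) i j * v j) := by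
          rw [← expand_quad N x v _ hsum]
          exact Finset.sum_congr rfl fun i _ => Finset.sum_congr rfl fun j _ => rfl

lemma part2 (a : ℕ → ℝ) (ha : ∀ j, |a j| < 1) (l : ℕ) (hal : a l = 0) (c : ℝ) (hc : 0 < c)
    (H : ∀ (N : ℕ) (x : Fin N → ℂ), (∀ i, x i ∈ Metric.ball (0:ℂ) 1) →
      (Matrix.of fun i j => (c:ℂ)^2 * (∑' m, ((|a m|:ℝ):ℂ) * (star (x j) * x i)^m)
        - (x i)^l * star ((x j)^l)).PosSemidef) : False := by
  -- setup
  set N := l + 1 with hNdef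
  have hN0 : (N : ℕ) ≠ 0 := Nat.succ_ne_zero l
  have hlN : l < N := Nat.lt_succ_self l
  set ζ : ℂ := Complex.exp (2 * (Real.pi : ℂ) * Complex.I / N) with hζdef
  have hprim : IsPrimitiveRoot ζ N := Complex.isPrimitiveRoot_exp N hN0
  have hζN : ζ ^ N = 1 := hprim.pow_eq_one
  have hζ0 : ζ ≠ 0 := by
    intro h
    rw [h, zero_pow hN0] at hζN
    exact zero_ne_one hζN
  have habs : ‖ζ‖ = 1 := hprim.norm'_eq_one hN0
  have hconj : star ζ = ζ⁻¹ := by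
    have h1 : ζ * star ζ = 1 := by
      rw [Complex.star_def, Complex.mul_conj, Complex.normSq_eq_norm_sq, habs]
      norm_num
    field_simp at h1 ⊢
    linear_combination h1
  -- the radius
  set t : ℝ := min (1/2) (1/(2*c^2+1)) with htdef
  have hc2 : (0:ℝ) < 2*c^2+1 := by positivity
  have ht0 : 0 < t := lt_min (by norm_num) (by positivity)
  have ht2 : t ≤ 1/2 := min_le_left _ _
  have htc : t ≤ 1/(2*c^2+1) := min_le_right _ _
  have ht1 : t < 1 := lt_of_le_of_lt ht2 (by norm_num)
  set r : ℝ := Real.sqrt t with hrdef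
  have hr0 : 0 < r := Real.sqrt_pos.mpr ht0
  have hrt : r^2 = t := Real.sq_sqrt ht0.le
  have hr1 : r < 1 := by
    rw [show (1:ℝ) = Real.sqrt 1 by simp [Real.sqrt_one]]
    exact Real.sqrt_lt_sqrt ht0.le ht1
  -- points and vector
  set x : Fin N → ℂ := fun i => (r:ℂ) * ζ ^ (i:ℕ) with hxdef
  set v : Fin N → ℂ := fun i => ζ ^ ((i:ℕ) * l) with hvdef
  have hxnorm : ∀ i : Fin N, ‖x i‖ = r := by
    intro i
    simp only [hxdef, norm_mul, norm_pow, habs, Complex.norm_real, Real.norm_eq_abs,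
      abs_of_pos hr0, one_pow, mul_one]
  have hxball : ∀ i : Fin N, x i ∈ Metric.ball (0:ℂ) 1 := by
    intro i
    rw [mem_ball_zero_iff, hxnorm i]
    exact hr1
  -- geometric sums of roots of unity
  have hgeom0 : ∀ w : ℂ, w ^ N = 1 → w ≠ 1 → ∑ i ∈ Finset.range N, w ^ i = 0 := by
    intro w hwN hw1
    rw [geom_sum_eq hw1, hwN, sub_self, zero_div]
  set w : ℕ → ℂ := fun m => ζ ^ m * (ζ⁻¹) ^ l with hwdef
  have hwN : ∀ m, (w m) ^ N = 1 := by
    intro m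
    have h1 : (ζ ^ m) ^ N = 1 := by
      rw [← pow_mul, mul_comm, pow_mul, hζN, one_pow]
    have h2 : ((ζ⁻¹) ^ l) ^ N = 1 := by
      rw [← pow_mul, mul_comm, pow_mul, inv_pow, hζN, inv_one, one_pow]
    simp only [hwdef]
    rw [mul_pow, h1, h2, one_mul]
  have hwl : w l = 1 := by
    simp only [hwdef]
    rw [← mul_pow, mul_inv_cancel₀ hζ0, one_pow]
  have hwne : ∀ m, m ≠ l → m < l + N → w m ≠ 1 := by
    intro m hml hmlt heq
    have heq' : ζ ^ m * (ζ⁻¹) ^ l = 1 := heq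
    have hζm : ζ ^ m = ζ ^ l := by
      have h1 : ζ ^ m * ((ζ⁻¹) ^ l * ζ ^ l) = ζ ^ l := by
        rw [← mul_assoc, heq', one_mul]
      rwa [← mul_pow, inv_mul_cancel₀ hζ0, one_pow, mul_one] at h1
    rcases Nat.lt_or_ge m l with hlt | hge
    · -- d = l - m, 1 ≤ d < N
      have hd : ζ ^ (l - m) = 1 := by
        have h1 : ζ ^ m * ζ ^ (l - m) = ζ ^ m * 1 := by
          rw [← pow_add, Nat.add_sub_cancel' hlt.le, mul_one, hζm]
        exact mul_left_cancel₀ (pow_ne_zero m hζ0) h1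
      have hdvd : N ∣ (l - m) := (hprim.pow_eq_one_iff_dvd _).mp hd
      have hpos : 0 < l - m := Nat.sub_pos_of_lt hlt
      have := Nat.le_of_dvd hpos hdvd
      omega
    · have hlt : l < m := lt_of_le_of_ne hge (fun h => hml h.symm)
      have hd : ζ ^ (m - l) = 1 := by
        have h1 : ζ ^ l * ζ ^ (m - l) = ζ ^ l * 1 := by
          rw [← pow_add, Nat.add_sub_cancel' hlt.le, mul_one, hζm]
        exact mul_left_cancel₀ (pow_ne_zero l hζ0) h1
      have hdvd : N ∣ (m - l) := (hprim.pow_eq_one_iff_dvd _).mp hd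
      have hpos : 0 < m - l := Nat.sub_pos_of_lt hlt
      have := Nat.le_of_dvd hpos hdvd
      omega
  -- the vector sums
  set A : ℕ → ℂ := fun m => ∑ i, star (v i) * (x i) ^ m with hAdef
  have hA : ∀ m, A m = (r:ℂ) ^ m * ∑ i ∈ Finset.range N, (w m) ^ i := by
    intro m
    have h1 : A m = ∑ i : Fin N, (r:ℂ) ^ m * (w m) ^ (i:ℕ) := by
      simp only [hAdef]
      refine Finset.sum_congr rfl fun i _ => ?_
      simp only [hvdef, hxdef, hwdef]
      rw [star_pow, hconj]
      rw [mul_pow, mul_pow, ← pow_mul, ← pow_mul, ← pow_mul]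
      rw [Nat.mul_comm (i:ℕ) l, Nat.mul_comm (i:ℕ) m]
      ring
    rw [h1, ← Finset.mul_sum, Fin.sum_univ_eq_sum_range (fun i => (w m) ^ i) N]
  have hAl : A l = (r:ℂ) ^ l * N := by
    rw [hA l, hwl]
    simp
  have hA0 : ∀ m, m ≠ l → m < l + N → A m = 0 := by
    intro m h1 h2
    rw [hA m, hgeom0 (w m) (hwN m) (hwne m h1 h2), mul_zero]
  have hAbound : ∀ m, Complex.normSq (A m) ≤ t ^ m * (N:ℝ)^2 := by
    intro m
    have hnw : ‖w m‖ = 1 := by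
      rw [hwdef]
      simp only [norm_mul, norm_pow, norm_inv, habs]
      norm_num
    have hS : ‖∑ i ∈ Finset.range N, (w m) ^ i‖ ≤ N := by
      calc ‖∑ i ∈ Finset.range N, (w m) ^ i‖ ≤ ∑ i ∈ Finset.range N, ‖(w m) ^ i‖ :=
            norm_sum_le _ _
        _ = ∑ i ∈ Finset.range N, 1 := by
            refine Finset.sum_congr rfl fun i _ => ?_
            rw [norm_pow, hnw, one_pow]
        _ = N := by simp
    have hAn : ‖A m‖ ≤ r ^ m * N := by
      rw [hA m, norm_mul, norm_pow, Complex.norm_real, Real.norm_eq_abs, abs_of_pos hr0]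
      exact mul_le_mul_of_nonneg_left hS (by positivity)
    have h1 : Complex.normSq (A m) = ‖A m‖^2 := by
      rw [Complex.normSq_eq_norm_sq]
    rw [h1]
    calc ‖A m‖^2 ≤ (r^m * N)^2 := by nlinarith [norm_nonneg (A m)]
      _ = (r^2)^m * (N:ℝ)^2 := by ring
      _ = t^m * (N:ℝ)^2 := by rw [hrt]
  -- summability
  have hz : ∀ i j : Fin N, ‖star (x j) * x i‖ < 1 := by
    intro i j
    apply norm_star_mul_lt_one <;> rw [hxnorm] <;> exact hr1
  have hsum : ∀ i j : Fin N, Summable (fun m => ((|a m| : ℝ) : ℂ) * (star (x j) * x i) ^ m) :=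
    fun i j => summable_pow_mul _ (fun m => (ha m).le) (fun m => abs_nonneg _) (hz i j)
  -- quadratic form
  have hpsd := H N x hxball
  have hQ := hpsd.dotProduct_mulVec_nonneg v
  set F : ℕ → ℝ := fun m => |a m| * Complex.normSq (A m) with hFdef
  have hexp : dotProduct (star v)
      (Matrix.mulVec (Matrix.of fun i j => (c:ℂ)^2 * (∑' m, ((|a m|:ℝ):ℂ) * (star (x j) * x i)^m)
        - (x i)^l * star ((x j)^l)) v)
      = (((c^2 * ∑' m, F m) - t^l * (N:ℝ)^2 : ℝ) : ℂ) := by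
    rw [quad_expand]
    have step1 : ∀ i j : Fin N,
        star (v i) * ((Matrix.of fun i j => (c:ℂ)^2 * (∑' m, ((|a m|:ℝ):ℂ) * (star (x j) * x i)^m)
          - (x i)^l * star ((x j)^l)) i j * v j)
        = (c:ℂ)^2 * (star (v i) * ((∑' m, ((|a m|:ℝ):ℂ) * (star (x j) * x i)^m) * v j))
          - star (v i) * (((x i)^l * star ((x j)^l)) * v j) := by
      intro i j
      show star (v i) * (((c:ℂ)^2 * (∑' m, ((|a m|:ℝ):ℂ) * (star (x j) * x i)^m)
          - (x i)^l * star ((x j)^l)) * v j) = _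
      ring
    calc ∑ i, ∑ j, star (v i) * ((Matrix.of fun i j => (c:ℂ)^2 * (∑' m, ((|a m|:ℝ):ℂ) * (star (x j) * x i)^m)
          - (x i)^l * star ((x j)^l)) i j * v j)
        = (c:ℂ)^2 * (∑ i, ∑ j, star (v i) * ((∑' m, ((|a m|:ℝ):ℂ) * (star (x j) * x i)^m) * v j))
          - ∑ i, ∑ j, star (v i) * (((x i)^l * star ((x j)^l)) * v j) := by
          rw [Finset.mul_sum, ← Finset.sum_sub_distrib]
          refine Finset.sum_congr rfl fun i _ => ?_
          rw [Finset.mul_sum, ← Finset.sum_sub_distrib]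
          exact Finset.sum_congr rfl fun j _ => step1 i j
      _ = (c:ℂ)^2 * (∑' m, ((|a m|:ℝ):ℂ) * (A m * star (A m))) - A l * star (A l) := by
          rw [expand_quad N x v _ hsum, expand_rank1 N l x v]
      _ = (((c^2 * ∑' m, F m) - t^l * (N:ℝ)^2 : ℝ) : ℂ) := by
          have e1 : ∀ m, ((|a m|:ℝ):ℂ) * (A m * star (A m)) = ((F m : ℝ) : ℂ) := by
            intro m
            rw [Complex.star_def, Complex.mul_conj, hFdef]
            push_cast
            ring
          have e2 : (∑' m, ((|a m|:ℝ):ℂ) * (A m * star (A m))) = ((∑' m, F m : ℝ) : ℂ) := by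
            rw [Complex.ofReal_tsum]
            exact tsum_congr e1
          have e3 : A l * star (A l) = ((t^l * (N:ℝ)^2 : ℝ) : ℂ) := by
            rw [Complex.star_def, Complex.mul_conj, hAl]
            have : Complex.normSq ((r:ℂ)^l * (N:ℂ)) = (r^l * N)^2 := by
              rw [show ((r:ℂ)^l * (N:ℂ)) = (((r^l * N : ℝ)) : ℂ) by push_cast; ring]
              rw [Complex.normSq_ofReal]
              ring
            rw [this]
            congr 1
            rw [← hrt]
            ring
          rw [e2, e3]
          push_cast
          ring
  rw [hexp] at hQ
  have hreal : (0:ℝ) ≤ c^2 * ∑' m, F m - t^l * (N:ℝ)^2 := Complex.zero_le_real.mp hQ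
  -- bound the tsum
  set u : ℕ → ℝ := fun m => if l + N ≤ m then t^m else 0 with hudef
  have hu0 : ∀ m, 0 ≤ u m := by
    intro m
    simp only [hudef]
    split
    · positivity
    · exact le_refl 0
  have husum : Summable u := by
    refine Summable.of_nonneg_of_le hu0 (fun m => ?_) (summable_geometric_of_lt_one ht0.le ht1)
    simp only [hudef]
    split
    · exact le_refl _
    · positivity
  have hF0 : ∀ m, 0 ≤ F m := fun m => mul_nonneg (abs_nonneg _) (Complex.normSq_nonneg _)
  have hFu : ∀ m, F m ≤ (N:ℝ)^2 * u m := by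
    intro m
    simp only [hFdef, hudef]
    by_cases h1 : l + N ≤ m
    · rw [if_pos h1]
      calc |a m| * Complex.normSq (A m) ≤ 1 * Complex.normSq (A m) :=
            mul_le_mul_of_nonneg_right (ha m).le (Complex.normSq_nonneg _)
        _ = Complex.normSq (A m) := one_mul _
        _ ≤ t^m * (N:ℝ)^2 := hAbound m
        _ = (N:ℝ)^2 * t^m := by ring
    · rw [if_neg h1, mul_zero]
      by_cases h2 : m = l
      · subst h2
        rw [hal]
        simp
      · rw [hA0 m h2 (by omega)]
        simp
  have hFsum : Summable F := Summable.of_nonneg_of_le hF0 hFu (husum.mul_left _)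
  have hFle : ∑' m, F m ≤ (N:ℝ)^2 * (t^(l+N) * (1-t)⁻¹) := by
    have h1 : ∑' m, F m ≤ ∑' m, (N:ℝ)^2 * u m :=
      Summable.tsum_le_tsum hFu hFsum (husum.mul_left _)
    have h2 : ∑' m, (N:ℝ)^2 * u m = (N:ℝ)^2 * ∑' m, u m := tsum_mul_left
    have h3 : ∑' m, u m = t^(l+N) * (1-t)⁻¹ := by
      rw [← Summable.sum_add_tsum_nat_add (l+N) husum]
      have h4 : ∑ i ∈ Finset.range (l+N), u i = 0 := by
        refine Finset.sum_eq_zero fun i hi => ?_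
        simp only [hudef]
        have hi' := Finset.mem_range.mp hi
        rw [if_neg (by omega : ¬ l + N ≤ i)]
      have h5 : ∀ i : ℕ, u (i + (l+N)) = t^(l+N) * t^i := by
        intro i
        simp only [hudef]
        rw [if_pos (by omega), pow_add]
        ring
      rw [h4, zero_add]
      calc ∑' i : ℕ, u (i + (l+N)) = ∑' i : ℕ, t^(l+N) * t^i := tsum_congr h5
        _ = t^(l+N) * ∑' i : ℕ, t^i := tsum_mul_left
        _ = t^(l+N) * (1-t)⁻¹ := by rw [tsum_geometric_of_lt_one ht0.le ht1]
    exact le_trans h1 (by rw [h2, h3])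
  -- contradiction
  have h1t : (0:ℝ) < 1 - t := by linarith
  have hN2 : (0:ℝ) < (N:ℝ)^2 := by positivity
  have htl : (0:ℝ) < t^l := by positivity
  have hx1 : t^l * (N:ℝ)^2 ≤ c^2 * ((N:ℝ)^2 * (t^(l+N) * (1-t)⁻¹)) := by
    have := mul_le_mul_of_nonneg_left hFle (sq_nonneg c)
    linarith
  have hx2 : t^l * (N:ℝ)^2 * (1-t) ≤ c^2 * (N:ℝ)^2 * t^l * t^N := by
    have h := mul_le_mul_of_nonneg_right hx1 h1t.le
    calc t^l * (N:ℝ)^2 * (1-t) ≤ c^2 * ((N:ℝ)^2 * (t^(l+N) * (1-t)⁻¹)) * (1-t) := h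
      _ = c^2 * (N:ℝ)^2 * (t^l * t^N) * ((1-t)⁻¹ * (1-t)) := by rw [pow_add]; ring
      _ = c^2 * (N:ℝ)^2 * t^l * t^N := by rw [inv_mul_cancel₀ h1t.ne']; ring
  have hkey : 1 - t ≤ c^2 * t^N := by nlinarith [hx2, mul_pos htl hN2]
  have htN : t^N ≤ t := pow_le_of_le_one ht0.le ht1.le hN0
  have hct : c^2 * t^N ≤ c^2 * t := mul_le_mul_of_nonneg_left htN (sq_nonneg c)
  have htc' : t * (2*c^2+1) ≤ 1 := by
    rw [le_div_iff₀ hc2] at htc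
    linarith
  have hctpos : (0:ℝ) < c^2 * t := by positivity
  linarith

/-- Let `K(x,y) = ∑ aⱼ (y* x)ʲ` be a power-series kernel on the unit disk with `|aⱼ| < 1`
for all `j` and `a_l = 0` for some `l`.  Then `f(x) = x^l` belongs to the RKHS induced by
`κ(x,y) = ∑ |aⱼ| (y*x)ʲ + (y*x)^l` but not to the RKHS induced by `∑ |aⱼ| (y*x)ʲ`;
moreover, the RKHS induced by `κ` is contractively contained in the RKHS induced by the
ω-kernel `1/(1 − y*x)`. -/
theorem gap_filling (a : ℕ → ℝ) (ha : ∀ j, |a j| < 1) (l : ℕ) (hal : a l = 0) :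
    MemRKHS (Metric.ball (0 : ℂ) 1)
      (fun x y => (∑' j, ((|a j| : ℝ) : ℂ) * (star y * x) ^ j) + (star y * x) ^ l)
      (fun x => x ^ l) ∧
    ¬ MemRKHS (Metric.ball (0 : ℂ) 1)
      (fun x y => ∑' j, ((|a j| : ℝ) : ℂ) * (star y * x) ^ j)
      (fun x => x ^ l) ∧
    IsKernelOn (Metric.ball (0 : ℂ) 1)
      (fun x y => (1 - star y * x)⁻¹ -
        ((∑' j, ((|a j| : ℝ) : ℂ) * (star y * x) ^ j) + (star y * x) ^ l)) := by

  have hb0 : ∀ m : ℕ, 0 ≤ |a m| := fun m => abs_nonneg _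
  have hb1 : ∀ m : ℕ, |a m| ≤ 1 := fun m => (ha m).le
  refine ⟨?_, ?_, ?_⟩
  · -- Part 1: membership
    refine ⟨1, one_pos, fun N x hx => ?_⟩
    have key := isKernelOn_tsum (fun m => |a m|) hb0 hb1 N x hx
    have heq : (Matrix.of fun i j => ((1:ℝ):ℂ)^2 *
          ((∑' m, ((|a m| : ℝ) : ℂ) * (star (x j) * x i) ^ m) + (star (x j) * x i) ^ l)
          - (x i)^l * star ((x j)^l))
        = Matrix.of fun i j => ∑' m, ((|a m| : ℝ) : ℂ) * (star (x j) * x i) ^ m := by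
      ext i j
      show ((1:ℝ):ℂ)^2 * ((∑' m, ((|a m| : ℝ) : ℂ) * (star (x j) * x i) ^ m)
          + (star (x j) * x i) ^ l) - (x i)^l * star ((x j)^l)
        = ∑' m, ((|a m| : ℝ) : ℂ) * (star (x j) * x i) ^ m
      rw [mul_pow, star_pow]
      push_cast
      ring
    exact heq ▸ key
  · -- Part 2: non-membership
    rintro ⟨c, hc, H⟩
    exact part2 a ha l hal c hc H
  · -- Part 3: contractive containment
    intro N x hx
    have hx' : ∀ i, ‖x i‖ < 1 := fun i => mem_ball_zero_iff.mp (hx i)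
    have key := isKernelOn_tsum (fun m => if m = l then 0 else 1 - |a m|)
      (fun m => by
        by_cases hm : m = l <;> simp only [hm, if_true, if_false] <;>
          [norm_num; skip] <;> linarith [abs_nonneg (a m), ha m])
      (fun m => by
        by_cases hm : m = l <;> simp only [hm, if_true, if_false] <;>
          [norm_num; skip] <;> linarith [abs_nonneg (a m), ha m]) N x hx
    have heq : (Matrix.of fun i j => (1 - star (x j) * x i)⁻¹ -
          ((∑' m, ((|a m| : ℝ) : ℂ) * (star (x j) * x i) ^ m) + (star (x j) * x i) ^ l))
        = Matrix.of fun i j =>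
            ∑' m, (((if m = l then 0 else 1 - |a m|) : ℝ) : ℂ) * (star (x j) * x i) ^ m := by
      ext i j
      show (1 - star (x j) * x i)⁻¹ -
          ((∑' m, ((|a m| : ℝ) : ℂ) * (star (x j) * x i) ^ m) + (star (x j) * x i) ^ l)
        = ∑' m, (((if m = l then 0 else 1 - |a m|) : ℝ) : ℂ) * (star (x j) * x i) ^ m
      set z := star (x j) * x i with hzdef
      have hz : ‖z‖ < 1 := norm_star_mul_lt_one (hx' i) (hx' j)
      have hgeo : Summable (fun n : ℕ => z ^ n) := summable_geometric_of_norm_lt_one hz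
      have hb : Summable (fun m => ((|a m| : ℝ) : ℂ) * z ^ m) :=
        summable_pow_mul _ hb1 hb0 hz
      have hd : Summable (fun m => (((if m = l then 0 else 1 - |a m|) : ℝ) : ℂ) * z ^ m) := by
        refine summable_pow_mul _ (fun m => ?_) (fun m => ?_) hz
        · split
          · norm_num
          · linarith [abs_nonneg (a m), ha m]
        · split
          · norm_num
          · linarith [abs_nonneg (a m), ha m]
      have h1 : ∑' n : ℕ, z ^ n = z ^ l + ∑' n, (if n = l then 0 else z ^ n) :=
        Summable.tsum_eq_add_tsum_ite hgeo l
      have h2 : (∑' m, ((|a m| : ℝ) : ℂ) * z ^ m)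
          + ∑' m, (((if m = l then 0 else 1 - |a m|) : ℝ) : ℂ) * z ^ m
          = ∑' n, (if n = l then 0 else z ^ n) := by
        rw [← Summable.tsum_add hb hd]
        refine tsum_congr fun n => ?_
        by_cases hn : n = l
        · subst hn; simp [hal]
        · simp only [hn, if_false]
          push_cast
          ring
      rw [← tsum_geometric_of_norm_lt_one hz, h1]
      linear_combination -h2
    exact heq ▸ key
end
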